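/- If X is a subshift with dense periodic points (for instance a nonwandering sofic shift or a full shift), then the topological full group ⟦X⟧ is residually finite. -/

import Mathlib

/-- The shift map `σ^n`: `(shiftZ n x) i = x (i + n)`; `shiftZ 1` is the left shift `σ`. -/
def shiftZ {A : Type*} (n : ℤ) (x : ℤ → A) : ℤ → A := fun i => x (i + n)

theorem shiftZ_shiftZ {A : Type*} (m n : ℤ) (x : ℤ → A) :
    shiftZ m (shiftZ n x) = shiftZ (n + m) x := by
  funext i; show x (i + m + n) = x (i + (n + m)); congr 1; ring

theorem shiftZ_zero {A : Type*} (x : ℤ → A) : shiftZ 0 x = x := by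
  funext i; show x (i + 0) = x i; simp

/-- Self-homeomorphisms of a space form a group under composition. -/
instance homeoGroup (X : Type*) [TopologicalSpace X] : Group (X ≃ₜ X) where
  mul f g := g.trans f
  one := Homeomorph.refl X
  inv := Homeomorph.symm
  mul_assoc f g h := Homeomorph.ext fun _ => rfl
  one_mul f := Homeomorph.ext fun _ => rfl
  mul_one f := Homeomorph.ext fun _ => rfl
  inv_mul_cancel f := Homeomorph.ext fun x => f.symm_apply_apply x

/-- The topological full group of a subshift `X`, as a subgroup of the group of
self-homeomorphisms of `X`: those homeomorphisms admitting a continuous cocycle. -/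
def tfgSubgroup {A : Type*} [TopologicalSpace A] (X : Set (ℤ → A)) :
    Subgroup (↥X ≃ₜ ↥X) where
  carrier := {f | ∃ c : ↥X → ℤ, Continuous c ∧
    ∀ x : ↥X, (f x : ℤ → A) = shiftZ (c x) (x : ℤ → A)}
  one_mem' := ⟨fun _ => 0, continuous_const, fun x => (shiftZ_zero _).symm⟩
  mul_mem' := by
    rintro f g ⟨cf, hcf, hf⟩ ⟨cg, hcg, hg⟩
    refine ⟨fun x => cf (g x) + cg x, (hcf.comp g.continuous).add hcg, fun x => ?_⟩
    show ((f (g x) : ℤ → A)) = _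
    rw [hf (g x), hg x, shiftZ_shiftZ, add_comm]
  inv_mem' := by
    rintro f ⟨cf, hcf, hf⟩
    refine ⟨fun x => -(cf (f.symm x)), (hcf.comp f.symm.continuous).neg, fun x => ?_⟩
    have h1 : (x : ℤ → A) = shiftZ (cf (f.symm x)) ((f.symm x : ↥X) : ℤ → A) := by
      have := hf (f.symm x); rwa [f.apply_symm_apply] at this
    show ((f.symm x : ↥X) : ℤ → A) = _
    rw [h1, shiftZ_shiftZ]
    simp [shiftZ_zero]

/-!
An element `x ↦ σ^{c(x)} x` of `⟦X⟧` moves each point within its own orbit, so it permutes the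
set of `p`-periodic points of `X`, which is finite. If `f ≠ 1`, the set of points moved by `f` is
open and nonempty, so by density it contains a periodic point `y`, of period `p` say; then `f`
acts nontrivially on the finite set of `p`-periodic points.
-/

open Function

theorem shiftZ_eq_self_iff {A : Type*} (n : ℤ) (x : ℤ → A) : shiftZ n x = x ↔ Periodic x n :=
  funext_iff

theorem Function.Periodic.apply_zmod_val {A : Type*} {x : ℤ → A} {p : ℕ} [NeZero p]
    (h : Periodic x p) (i : ℤ) : x (i : ZMod p).val = x i := by
  rw [ZMod.val_intCast, Int.emod_def, mul_comm]
  exact h.sub_int_mul_eq _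

/-- A `p`-periodic sequence factors through `ℤ → ZMod p`, so there are at most `|A| ^ p` of them. -/
theorem finite_setOf_periodic (A : Type*) [Finite A] (p : ℕ) [NeZero p] :
    {x : ℤ → A | Periodic x p}.Finite := by
  refine Set.finite_coe_iff.mp (Finite.of_injective (fun x r => x.1 (r : ZMod p).val) ?_)
  intro x y hxy
  ext i
  simpa only [x.2.apply_zmod_val, y.2.apply_zmod_val] using congrFun hxy (i : ZMod p)

def MonoidHom.subtypePerm {G α : Type*} [Group G] (ρ : G →* Equiv.Perm α) (s : α → Prop)
    (hs : ∀ g x, s x → s (ρ g x)) : G →* Equiv.Perm (Subtype s) where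
  toFun g := (ρ g).subtypePerm fun x =>
    ⟨fun hx => by simpa using hs g⁻¹ _ hx, hs g x⟩
  map_one' := by ext; simp
  map_mul' g h := by
    ext x
    simp only [Equiv.Perm.subtypePerm_apply, map_mul]
    rfl

theorem exists_monoidHom_perm_fin_ne_one {G α : Type*} [Group G] [Finite α]
    (ρ : G →* Equiv.Perm α) {g : G} (hg : ρ g ≠ 1) :
    ∃ n, ∃ φ : G →* Equiv.Perm (Fin n), φ g ≠ 1 := by
  obtain ⟨n, ⟨e⟩⟩ := Finite.exists_equiv_fin α
  exact ⟨n, e.permCongrHom.toMonoidHom.comp ρ, fun h => hg (e.permCongrHom.map_eq_one_iff.mp h)⟩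

namespace tfgSubgroup

variable {A : Type*} [TopologicalSpace A] (X : Set (ℤ → A))

def toPermHom : tfgSubgroup X →* Equiv.Perm X where
  toFun f := (f : X ≃ₜ X).toEquiv
  map_one' := rfl
  map_mul' _ _ := rfl

variable {X}

theorem periodic_apply (f : tfgSubgroup X) {x : X} {p : ℤ} (hx : Periodic (x : ℤ → A) p) :
    Periodic ((f : X ≃ₜ X) x : ℤ → A) p := by
  obtain ⟨c, -, hc⟩ := f.2
  rw [hc x]
  exact hx.add_const (c x)

end tfgSubgroup

theorem tfg_residually_finite_general {A : Type*} [Fintype A] [TopologicalSpace A]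
    [DiscreteTopology A] (X : Set (ℤ → A))
    (hper : Dense {x : ↥X | ∃ p : ℕ, 1 ≤ p ∧ shiftZ (p : ℤ) (x : ℤ → A) = (x : ℤ → A)}) :
    ∀ f : ↥(tfgSubgroup X), f ≠ 1 →
      ∃ (Q : Type) (_ : Group Q) (_ : Finite Q) (φ : ↥(tfgSubgroup X) →* Q), φ f ≠ 1 := by
  intro f hf
  obtain ⟨x, hx⟩ : ∃ x, (f : X ≃ₜ X) x ≠ x := by
    by_contra! h
    exact hf (Subtype.ext (Homeomorph.ext h))
  obtain ⟨y, ⟨p, hp, hy⟩, hfy⟩ :=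
    hper.exists_mem_open (isOpen_ne_fun (f : X ≃ₜ X).continuous continuous_id) ⟨x, hx⟩
  have : NeZero p := ⟨by omega⟩
  let ρ := (tfgSubgroup.toPermHom X).subtypePerm (fun x : X => Periodic (x : ℤ → A) p)
    fun f _ => tfgSubgroup.periodic_apply f
  have : Finite {x : X // Periodic (x : ℤ → A) p} :=
    ((finite_setOf_periodic A p).preimage Subtype.val_injective.injOn).to_subtype
  have hρ : ρ f ≠ 1 := fun h =>
    hfy (congrArg Subtype.val (Equiv.ext_iff.mp h ⟨y, (shiftZ_eq_self_iff _ _).mp hy⟩))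
  obtain ⟨n, φ, hφ⟩ := exists_monoidHom_perm_fin_ne_one ρ hρ
  exact ⟨Equiv.Perm (Fin n), inferInstance, inferInstance, φ, hφ⟩

/-- If `X` is a subshift with dense periodic points, then its topological full group is
residually finite. -/
theorem tfg_residually_finite {A : Type*} [Fintype A] [TopologicalSpace A]
    [DiscreteTopology A] (X : Set (ℤ → A)) (hclosed : IsClosed X)
    (hinv : ∀ x ∈ X, ∀ n : ℤ, shiftZ n x ∈ X)
    (hper : Dense {x : ↥X | ∃ p : ℕ, 1 ≤ p ∧ shiftZ (p : ℤ) (x : ℤ → A) = (x : ℤ → A)}) :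
    ∀ f : ↥(tfgSubgroup X), f ≠ 1 →
      ∃ (Q : Type) (_ : Group Q) (_ : Finite Q) (φ : ↥(tfgSubgroup X) →* Q), φ f ≠ 1 :=
  tfg_residually_finite_general X hper
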